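/- Let a ∈ ℂ, t ∈ ℝ, u ∈ ℂ with |u| = 1, λ > 0, and let (z,ζ,w) ∈ ℂ³. Set δ := 1 − 2i·conj(a)·z − (t + i|a|²)·w + i·conj(a)²·(wζ + iz²) and assume δ ≠ 0. Define (z̃,ζ̃,w̃) := ( λu·(z + aw − conj(a)·(wζ + iz²))/δ , u²·(ζ − 2iaz − ia²w − (t − i|a|²)·(wζ + iz²))/δ , λ²·w/δ ). If wζ + iz² = 0, then w̃ζ̃ + i·z̃² = 0. (That is, the variety V = {wζ + iz² = 0} is invariant under the stability group Aut(𝒳,0).) -/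

import Mathlib

/-- The common denominator `δ` of the stability-group automorphisms of `(𝒳,0)`. -/
noncomputable def deltaAut (a : ℂ) (t : ℝ) (z ζ w : ℂ) : ℂ :=
  1 - 2 * Complex.I * (starRingEnd ℂ) a * z
    - ((t : ℂ) + Complex.I * (Complex.normSq a : ℂ)) * w
    + Complex.I * ((starRingEnd ℂ) a) ^ 2 * (w * ζ + Complex.I * z ^ 2)

/-- First component `z̃` of the stability-group automorphism `ψ`. -/
noncomputable def psiZ (a : ℂ) (t : ℝ) (u : ℂ) (l : ℝ) (z ζ w : ℂ) : ℂ :=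
  (l : ℂ) * u * (z + a * w - (starRingEnd ℂ) a * (w * ζ + Complex.I * z ^ 2)) /
    deltaAut a t z ζ w

/-- Second component `ζ̃` of the stability-group automorphism `ψ`. -/
noncomputable def psiZeta (a : ℂ) (t : ℝ) (u : ℂ) (l : ℝ) (z ζ w : ℂ) : ℂ :=
  u ^ 2 * (ζ - 2 * Complex.I * a * z - Complex.I * a ^ 2 * w
      - ((t : ℂ) - Complex.I * (Complex.normSq a : ℂ)) * (w * ζ + Complex.I * z ^ 2)) /
    deltaAut a t z ζ w

/-- Third component `w̃` of the stability-group automorphism `ψ`. -/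
noncomputable def psiW (a : ℂ) (t : ℝ) (u : ℂ) (l : ℝ) (z ζ w : ℂ) : ℂ :=
  (l : ℂ) ^ 2 * w / deltaAut a t z ζ w

open Complex

theorem quadric_numerators_eq_deltaAut_mul (a : ℂ) (t : ℝ) (z ζ w : ℂ) :
    w * (ζ - 2 * I * a * z - I * a ^ 2 * w - ((t : ℂ) - I * (normSq a : ℂ)) * (w * ζ + I * z ^ 2))
      + I * (z + a * w - (starRingEnd ℂ) a * (w * ζ + I * z ^ 2)) ^ 2
      = deltaAut a t z ζ w * (w * ζ + I * z ^ 2) := by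
  rw [deltaAut, normSq_eq_conj_mul_self]
  ring

-- Also holds where `δ = 0`: there both sides are the junk value `0`.
theorem psiW_mul_psiZeta_add_I_mul_psiZ_sq (a u : ℂ) (t l : ℝ) (z ζ w : ℂ) :
    psiW a t u l z ζ w * psiZeta a t u l z ζ w + I * psiZ a t u l z ζ w ^ 2
      = (l : ℂ) ^ 2 * u ^ 2 * (w * ζ + I * z ^ 2) / deltaAut a t z ζ w := by
  rcases eq_or_ne (deltaAut a t z ζ w) 0 with hδ | hδ
  · simp [psiW, psiZeta, psiZ, hδ]
  · rw [psiW, psiZeta, psiZ]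
    field_simp
    linear_combination (l : ℂ) ^ 2 * u ^ 2 * quadric_numerators_eq_deltaAut_mul a t z ζ w

theorem V_invariant_under_stability_group_general (a u : ℂ) (t l : ℝ)
    (z ζ w : ℂ)
    (hV : w * ζ + Complex.I * z ^ 2 = 0) :
    psiW a t u l z ζ w * psiZeta a t u l z ζ w
      + Complex.I * (psiZ a t u l z ζ w) ^ 2 = 0 := by
  rw [psiW_mul_psiZeta_add_I_mul_psiZ_sq, hV, mul_zero, zero_div]

/-- The variety `V = {wζ + iz² = 0}` is invariant under the stability
group `Aut(𝒳,0)`: if `δ ≠ 0` and `wζ + iz² = 0`, then `w̃ζ̃ + i·z̃² = 0` for the image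
`(z̃,ζ̃,w̃) = ψ(z,ζ,w)`. -/
theorem V_invariant_under_stability_group (a u : ℂ) (t l : ℝ)
    (hu : ‖u‖ = 1) (hl : 0 < l) (z ζ w : ℂ)
    (hδ : deltaAut a t z ζ w ≠ 0)
    (hV : w * ζ + Complex.I * z ^ 2 = 0) :
    psiW a t u l z ζ w * psiZeta a t u l z ζ w
      + Complex.I * (psiZ a t u l z ζ w) ^ 2 = 0 :=
  V_invariant_under_stability_group_general a u t l z ζ w hV
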